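/- The series Σ_{m=1}^∞ 12H_m(m − H_m)/((m+1)(m+2)(m+3)) converges to 39/4 − π²/2. -/
import Mathlib


open Finset

/-- `n`-th harmonic number. -/
noncomputable def H (n : ℕ) : ℝ := ∑ k ∈ Finset.Icc 1 n, (1 : ℝ) / k

/-- Second-order harmonic number. -/
noncomputable def Hbar (n : ℕ) : ℝ := ∑ k ∈ Finset.Icc 1 n, (1 : ℝ) / (k : ℝ) ^ 2

open Filter Real

lemma H_zero : H 0 = 0 := by simp [H]
lemma Hbar_zero : Hbar 0 = 0 := by simp [Hbar]

lemma H_succ (n : ℕ) : H (n + 1) = H n + 1 / ((n : ℝ) + 1) := by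
  unfold H
  rw [Finset.sum_Icc_succ_top (by omega)]
  push_cast; ring

lemma Hbar_succ (n : ℕ) : Hbar (n + 1) = Hbar n + 1 / ((n : ℝ) + 1) ^ 2 := by
  unfold Hbar
  rw [Finset.sum_Icc_succ_top (by omega)]
  push_cast; ring

lemma H_nonneg (n : ℕ) : 0 ≤ H n := by
  apply Finset.sum_nonneg; intro k _; positivity

lemma H_le_self (n : ℕ) : H n ≤ n := by
  induction n with
  | zero => simp [H_zero]
  | succ n ih =>
    rw [H_succ]; push_cast
    have : (1:ℝ) / ((n:ℝ)+1) ≤ 1 := by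
      rw [div_le_one (by positivity)]; linarith [Nat.cast_nonneg (α := ℝ) n]
    linarith

lemma H_le_sqrt (n : ℕ) : H n ≤ 2 * Real.sqrt n := by
  induction n with
  | zero => simp [H_zero]
  | succ n ih =>
    rw [H_succ]
    set s := Real.sqrt n with hs
    set t := Real.sqrt (n + 1 : ℕ) with ht
    have hs0 : 0 ≤ s := Real.sqrt_nonneg _
    have hs2 : s ^ 2 = n := Real.sq_sqrt (by positivity)
    have ht2 : t ^ 2 = (n : ℝ) + 1 := by
      rw [ht, Real.sq_sqrt (by positivity)]; push_cast; ring
    have ht1 : 1 ≤ t := by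
      rw [ht]; rw [show (1:ℝ) = Real.sqrt 1 by simp]
      apply Real.sqrt_le_sqrt; push_cast; linarith [Nat.cast_nonneg (α := ℝ) n]
    have hst : s ≤ t := by
      rw [hs, ht]; apply Real.sqrt_le_sqrt; push_cast; linarith
    have key : 1 / ((n : ℝ) + 1) ≤ 2 * (t - s) := by
      rw [div_le_iff₀ (by positivity)]
      have h1 : (t - s) * (t + s) = 1 := by nlinarith
      nlinarith [mul_le_mul_of_nonneg_left hst (by linarith : (0:ℝ) ≤ t - s)]
    linarith

/-- Closed form for the partial sums. -/
noncomputable def F (N : ℕ) : ℝ :=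
  39 / 4 - 3 * Hbar N
    + 6 * ((N : ℝ) + 1) * H N ^ 2 / (((N:ℝ)+1) * ((N:ℝ)+2) * ((N:ℝ)+3))
    - 12 * (N : ℝ) * ((N:ℝ)+2) * H N / (((N:ℝ)+1) * ((N:ℝ)+2) * ((N:ℝ)+3))
    - (3/2) * (10*(N:ℝ)^2 + 43*(N:ℝ) + 39) / (((N:ℝ)+1) * ((N:ℝ)+2) * ((N:ℝ)+3))

lemma partial_sum (N : ℕ) :
    ∑ m ∈ Finset.range N, 12 * H (m + 1) * (((m : ℝ) + 1) - H (m + 1)) /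
          (((m : ℝ) + 2) * ((m : ℝ) + 3) * ((m : ℝ) + 4)) = F N := by
  induction N with
  | zero => simp [F, H_zero, Hbar_zero]; norm_num
  | succ N ih =>
    rw [Finset.sum_range_succ, ih, F, F, H_succ, Hbar_succ]
    have h1 : ((N:ℝ) + 1) ≠ 0 := by positivity
    have h2 : ((N:ℝ) + 2) ≠ 0 := by positivity
    have h3 : ((N:ℝ) + 3) ≠ 0 := by positivity
    have h4 : ((N:ℝ) + 4) ≠ 0 := by positivity
    push_cast
    field_simp
    ring

lemma Hbar_eq_range (N : ℕ) : Hbar N = ∑ n ∈ Finset.range N, (1:ℝ) / ((n:ℝ)+1)^2 := by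
  induction N with
  | zero => simp [Hbar_zero]
  | succ N ih => rw [Hbar_succ, Finset.sum_range_succ, ih]

lemma Hbar_tendsto : Tendsto Hbar atTop (nhds (Real.pi ^ 2 / 6)) := by
  have h0 : HasSum (fun n : ℕ => (1:ℝ) / ((n:ℝ)+1) ^ 2) (Real.pi ^ 2 / 6) := by
    have h1 : HasSum (fun n : ℕ => (1:ℝ) / (((n + 1 : ℕ)):ℝ) ^ 2) (Real.pi ^ 2 / 6) := by
      rw [hasSum_nat_add_iff (f := fun n : ℕ => (1:ℝ) / (n:ℝ) ^ 2) 1]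
      simpa using hasSum_zeta_two
    convert h1 using 2 with n
    push_cast; ring
  have := h0.tendsto_sum_nat
  apply this.congr
  intro N; exact (Hbar_eq_range N).symm

lemma sqrt_nat_tendsto : Tendsto (fun N : ℕ => Real.sqrt N) atTop atTop := by
  have h := (tendsto_rpow_atTop (y := (1:ℝ)/2) (by norm_num)).comp
    (tendsto_natCast_atTop_atTop (R := ℝ))
  apply h.congr
  intro n
  simp [Function.comp, Real.sqrt_eq_rpow]

lemma t1_tendsto : Tendsto (fun N : ℕ =>
    6 * ((N : ℝ) + 1) * H N ^ 2 / (((N:ℝ)+1) * ((N:ℝ)+2) * ((N:ℝ)+3))) atTop (nhds 0) := by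
  apply squeeze_zero' (g := fun N : ℕ => 24 / (N : ℝ))
  · filter_upwards with N
    positivity
  · filter_upwards [eventually_ge_atTop 1] with N hN
    have hn : (1:ℝ) ≤ (N:ℝ) := by exact_mod_cast hN
    have hh0 := H_nonneg N
    have hh : H N ≤ 2 * Real.sqrt N := H_le_sqrt N
    have hs2 : Real.sqrt N ^ 2 = (N:ℝ) := Real.sq_sqrt (by positivity)
    have hh2 : H N ^ 2 ≤ 4 * (N:ℝ) := by nlinarith [Real.sqrt_nonneg (N:ℝ)]
    rw [div_le_div_iff₀ (by positivity) (by positivity)]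
    have e1 : H N ^ 2 * (N:ℝ) ≤ 4 * (N:ℝ) * (N:ℝ) :=
      by nlinarith [mul_le_mul_of_nonneg_right hh2 (by positivity : (0:ℝ) ≤ (N:ℝ))]
    nlinarith [mul_le_mul_of_nonneg_left e1 (by positivity : (0:ℝ) ≤ 6 * ((N:ℝ)+1))]
  · exact tendsto_const_div_atTop_nhds_zero_nat 24

lemma t2_tendsto : Tendsto (fun N : ℕ =>
    12 * (N : ℝ) * ((N:ℝ)+2) * H N / (((N:ℝ)+1) * ((N:ℝ)+2) * ((N:ℝ)+3))) atTop (nhds 0) := by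
  apply squeeze_zero' (g := fun N : ℕ => 24 / Real.sqrt N)
  · filter_upwards with N
    have := H_nonneg N
    positivity
  · filter_upwards [eventually_ge_atTop 1] with N hN
    have hn : (1:ℝ) ≤ (N:ℝ) := by exact_mod_cast hN
    have hh0 := H_nonneg N
    have hh : H N ≤ 2 * Real.sqrt N := H_le_sqrt N
    have hs2 : Real.sqrt N ^ 2 = (N:ℝ) := Real.sq_sqrt (by positivity)
    have hs1 : (1:ℝ) ≤ Real.sqrt N := by
      rw [show (1:ℝ) = Real.sqrt 1 by simp]; exact Real.sqrt_le_sqrt hn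
    rw [div_le_div_iff₀ (by positivity) (by positivity)]
    have e1 : 12 * (N:ℝ) * ((N:ℝ)+2) * Real.sqrt N * H N
        ≤ 12 * (N:ℝ) * ((N:ℝ)+2) * Real.sqrt N * (2 * Real.sqrt N) :=
      mul_le_mul_of_nonneg_left hh (by positivity)
    have e2 : 12 * (N:ℝ) * ((N:ℝ)+2) * Real.sqrt N * (2 * Real.sqrt N)
        = 24 * (N:ℝ) * (N:ℝ) * ((N:ℝ)+2) := by
      linear_combination (24 * (N:ℝ) * ((N:ℝ)+2)) * hs2
    nlinarith [e1, e2, mul_nonneg (mul_nonneg (by linarith : (0:ℝ) ≤ (N:ℝ)) (by linarith : (0:ℝ) ≤ (N:ℝ))) (by linarith : (0:ℝ) ≤ (N:ℝ))]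
  · exact tendsto_const_nhds.div_atTop sqrt_nat_tendsto

lemma t3_tendsto : Tendsto (fun N : ℕ =>
    (3/2) * (10*(N:ℝ)^2 + 43*(N:ℝ) + 39) / (((N:ℝ)+1) * ((N:ℝ)+2) * ((N:ℝ)+3))) atTop (nhds 0) := by
  apply squeeze_zero' (g := fun N : ℕ => 138 / (N : ℝ))
  · filter_upwards with N; positivity
  · filter_upwards [eventually_ge_atTop 1] with N hN
    have hn : (1:ℝ) ≤ (N:ℝ) := by exact_mod_cast hN
    rw [div_le_div_iff₀ (by positivity) (by positivity)]
    nlinarith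
  · exact tendsto_const_div_atTop_nhds_zero_nat 138

theorem sum_H_times_m_minus_H :
    HasSum (fun m : ℕ =>
        12 * H (m + 1) * (((m : ℝ) + 1) - H (m + 1)) /
          (((m : ℝ) + 2) * ((m : ℝ) + 3) * ((m : ℝ) + 4)))
      (39 / 4 - Real.pi ^ 2 / 2) := by
  rw [hasSum_iff_tendsto_nat_of_nonneg]
  · have hF : Tendsto F atTop
        (nhds (39 / 4 - 3 * (Real.pi ^ 2 / 6) + 0 - 0 - 0)) :=
      (((tendsto_const_nhds.sub (Hbar_tendsto.const_mul 3)).add t1_tendsto).sub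
        t2_tendsto).sub t3_tendsto
    have : (39 / 4 - 3 * (Real.pi ^ 2 / 6) + 0 - 0 - 0 : ℝ) = 39 / 4 - Real.pi ^ 2 / 2 := by
      ring
    rw [this] at hF
    exact hF.congr fun N => (partial_sum N).symm
  · intro m
    have h1 : 0 ≤ H (m + 1) := H_nonneg _
    have h2 : H (m + 1) ≤ (m : ℝ) + 1 := by
      have := H_le_self (m + 1); push_cast at this; linarith
    have hnum : 0 ≤ 12 * H (m + 1) * (((m : ℝ) + 1) - H (m + 1)) := by
      apply mul_nonneg (by linarith) (by linarith)
    apply div_nonneg hnum (by positivity)
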